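/- Let n ≥ 2 and 2 ≤ m ≤ n with n − m even. Then Σ_{k ≡ n (mod 2)} C_m(n+1, k) = (n+m)(n+1−m)(n−1)! / (2·m!) + (n−1)!/(m−2)!, where the sum is over all k ≥ 1 with k congruent to n modulo 2. -/

import Mathlib

open Equiv Finset

noncomputable section

/-- The number of cycles of a permutation of `Fin n`, counting fixed points as cycles. -/
def cycleCount {n : ℕ} (σ : Equiv.Perm (Fin n)) : ℕ :=
  σ.cycleType.card + (Finset.univ.filter fun x => σ x = x).card

/-- A permutation of `Fin n` consisting of a single cycle of length `n`
(equivalently, having exactly one cycle, fixed points counting as cycles). -/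
def IsFullCycle {n : ℕ} (σ : Equiv.Perm (Fin n)) : Prop :=
  cycleCount σ = 1

/-- `σ` separates the first `m` elements (`1, …, m`, i.e. indices `0, …, m-1`):
they lie in pairwise distinct cycles of `σ`. -/
def Separates {n : ℕ} (m : ℕ) (σ : Equiv.Perm (Fin n)) : Prop :=
  ∀ i j : Fin n, (i : ℕ) < m → (j : ℕ) < m → i ≠ j → ¬ σ.SameCycle i j

/-- `C_m(N, k)`: the number of permutations of `[N]` with exactly `k` cycles
that separate the first `m` elements. -/
def sepCount (N m k : ℕ) : ℕ :=
  Nat.card {σ : Equiv.Perm (Fin N) // cycleCount σ = k ∧ Separates m σ}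

/-- `C(N, k)`: the signless Stirling number of the first kind, i.e. the number of
permutations of `[N]` with exactly `k` cycles (fixed points counting as cycles). -/
def stirlingCycle (N k : ℕ) : ℕ :=
  Nat.card {σ : Equiv.Perm (Fin N) // cycleCount σ = k}

/-!
Inserting the point `N` into a permutation of `Fin N`, either as a new fixed point or just
before one of the `N` old points in its cycle, is a bijection
`Option (Fin N) × Perm (Fin N) ≃ Perm (Fin (N + 1))`. It does not change which old points share
a cycle, so it preserves separation of `[m]` for `m ≤ N`, and it flips the sign exactly when the
new point is not fixed. Hence the number `A N` of permutations separating `[m]` and their signed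
count `S N` satisfy `A (N + 1) = (N + 1) A N` and `S (N + 1) = (1 - N) S N`, with
`A m = S m = 1`. Since `sign σ = (-1) ^ (N + cycleCount σ)`, the sum in the theorem counts the
odd separating permutations of `Fin (n + 1)`, that is `(A (n + 1) - S (n + 1)) / 2`.
-/

open Nat

namespace Equiv.Perm

variable {α β : Type*}

theorem SameCycle.mem_of_mapsTo [Finite α] {f : Perm α} {s : Set α} (hs : Set.MapsTo f s s)
    {x y : α} (h : f.SameCycle x y) (hx : x ∈ s) : y ∈ s := by
  obtain ⟨n, rfl⟩ := h.exists_nat_pow_eq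
  rw [coe_pow]
  exact hs.iterate n hx

theorem sameCycle_permCongr (e : α ≃ β) (f : Perm α) (x y : α) :
    (e.permCongr f).SameCycle (e x) (e y) ↔ f.SameCycle x y := by
  have hpow (i : ℤ) : e.permCongr f ^ i = e.permCongr (f ^ i) :=
    (map_zpow e.permCongrHom f i).symm
  simp only [SameCycle, hpow, permCongr_apply, symm_apply_apply, e.apply_eq_iff_eq]

variable [DecidableEq α] (p : Option α) (σ : Perm α)

theorem decomposeOption_symm_apply_some (x : α) :
    decomposeOption.symm (p, σ) (some x) = some (σ x) ∨
      decomposeOption.symm (p, σ) (some x) = none ∧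
        decomposeOption.symm (p, σ) none = some (σ x) := by
  simp only [decomposeOption_symm_apply, coe_mul, Function.comp_apply, optionCongr_apply,
    Option.map_some, Option.map_none, swap_apply_left]
  by_cases hp : p = some (σ x)
  · subst hp
    simp
  · exact .inl (swap_apply_of_ne_of_ne (Option.some_ne_none _) (Ne.symm hp))

theorem sameCycle_decomposeOption_symm_some [Finite α] {x y : α} :
    (decomposeOption.symm (p, σ)).SameCycle (some x) (some y) ↔ σ.SameCycle x y := by
  constructor
  · intro h
    have hnone : decomposeOption.symm (p, σ) none = p := by simp
    -- along an orbit of `decomposeOption.symm (p, σ)`, the point `none` stands in for `p`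
    refine h.mem_of_mapsTo (s := {o | ∀ z ∈ o.or p, σ.SameCycle x z}) ?_
      (by simp [SameCycle.refl]) y (by simp)
    rintro (_ | z) hz w hw
    · rw [hnone, Option.or_self] at hw
      exact hz w hw
    · have hσz : σ.SameCycle x (σ z) := sameCycle_apply_right.2 (hz z rfl)
      rcases decomposeOption_symm_apply_some p σ z with h1 | ⟨h1, h2⟩
      · rw [h1, Option.some_or, Option.mem_some_iff] at hw
        exact hw ▸ hσz
      · rw [h1, Option.none_or, ← hnone, h2, Option.mem_some_iff] at hw
        exact hw ▸ hσz
  · intro h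
    refine h.mem_of_mapsTo (s := {z | (decomposeOption.symm (p, σ)).SameCycle (some x) (some z)})
      ?_ (SameCycle.refl _ _)
    intro z hz
    rcases decomposeOption_symm_apply_some p σ z with h1 | ⟨h1, h2⟩
    · exact hz.trans ⟨1, by simpa using h1⟩
    · exact hz.trans ⟨2, by rw [zpow_two, mul_apply, h1, h2]⟩

theorem sign_decomposeOption_symm [Fintype α] :
    sign (decomposeOption.symm (p, σ)) = (if p = none then 1 else -1) * sign σ := by
  cases p <;> simp

end Equiv.Perm

open Equiv.Perm

def decomposeLast (N : ℕ) : Perm (Fin (N + 1)) ≃ Option (Fin N) × Perm (Fin N) :=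
  (permCongr finSuccEquivLast).trans decomposeOption

section decomposeLast

variable {N : ℕ} (p : Option (Fin N)) (σ : Perm (Fin N))

theorem sameCycle_decomposeLast_symm_castSucc (i j : Fin N) :
    ((decomposeLast N).symm (p, σ)).SameCycle i.castSucc j.castSucc ↔ σ.SameCycle i j := by
  rw [← finSuccEquivLast_symm_some, ← finSuccEquivLast_symm_some]
  exact (sameCycle_permCongr finSuccEquivLast.symm _ _ _).trans
    (sameCycle_decomposeOption_symm_some p σ)

theorem sign_decomposeLast_symm :
    sign ((decomposeLast N).symm (p, σ)) = (if p = none then 1 else -1) * sign σ :=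
  (sign_permCongr finSuccEquivLast.symm _).trans (sign_decomposeOption_symm p σ)

theorem separates_decomposeLast_symm_iff {m : ℕ} (hm : m ≤ N) :
    Separates m ((decomposeLast N).symm (p, σ)) ↔ Separates m σ := by
  constructor
  · intro h i j hi hj hij
    rw [← sameCycle_decomposeLast_symm_castSucc p σ]
    exact h _ _ hi hj (Fin.castSucc_injective _ |>.ne hij)
  · intro h i j hi hj hij
    rw [← Fin.castSucc_castLT i (by omega), ← Fin.castSucc_castLT j (by omega),
      sameCycle_decomposeLast_symm_castSucc]
    exact h _ _ hi hj fun hij' => hij (by simpa using congrArg Fin.castSucc hij')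

end decomposeLast

theorem separates_self_iff {m : ℕ} {σ : Perm (Fin m)} : Separates m σ ↔ σ = 1 := by
  refine ⟨fun h => ?_, fun h => ?_⟩
  · ext i
    by_contra hi
    exact h (σ i) i (σ i).isLt i.isLt (Fin.ext_iff.not.2 hi) (SameCycle.refl _ _).apply_left
  · subst h
    intro i j _ _ hij hsc
    exact hij (sameCycle_one.1 hsc)

open scoped Classical in
theorem sum_separates_succ {R : Type*} [CommSemiring R] (χ : ℤˣ →* R) {m N : ℕ} (hm : m ≤ N) :
    ∑ σ : Perm (Fin (N + 1)) with Separates m σ, χ (sign σ) =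
      (1 + N * χ (-1)) * ∑ σ : Perm (Fin N) with Separates m σ, χ (sign σ) := by
  rw [sum_filter, sum_filter, ← (decomposeLast N).symm.sum_comp, Fintype.sum_prod_type_right,
    mul_sum]
  refine sum_congr rfl fun σ _ => ?_
  simp only [separates_decomposeLast_symm_iff _ _ hm, sign_decomposeLast_symm, map_mul]
  split_ifs
  · simp only [Fintype.sum_option, ↓reduceIte, map_one, one_mul, reduceCtorEq, sum_const,
      Finset.card_univ, Fintype.card_fin, nsmul_eq_mul]
    ring
  · simp

open scoped Classical in
theorem sum_separates_self {R : Type*} [CommSemiring R] (χ : ℤˣ →* R) (m : ℕ) :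
    ∑ σ : Perm (Fin m) with Separates m σ, χ (sign σ) = 1 := by
  simp [separates_self_iff, filter_eq']

open scoped Classical in
theorem factorial_mul_card_separates {m N : ℕ} (hm : m ≤ N) :
    m ! * #{σ : Perm (Fin N) | Separates m σ} = N ! := by
  have hcard_eq_sum (N : ℕ) : #{σ : Perm (Fin N) | Separates m σ} =
      ∑ σ : Perm (Fin N) with Separates m σ, (1 : ℤˣ →* ℕ) (sign σ) := by
    simp
  induction N, hm using Nat.le_induction with
  | base => rw [hcard_eq_sum, sum_separates_self, mul_one]
  | succ N hmN ih =>
    rw [hcard_eq_sum, sum_separates_succ _ hmN, ← hcard_eq_sum, factorial_succ, ← ih,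
      MonoidHom.one_apply, Nat.cast_id]
    ring

open scoped Classical in
theorem factorial_mul_sum_sign_separates {m N : ℕ} (hm2 : 2 ≤ m) (hm : m ≤ N) :
    ((m - 2)! : ℤ) * ∑ σ : Perm (Fin N) with Separates m σ, (sign σ : ℤ) =
      (-1) ^ (N - m) * (N - 2)! := by
  induction N, hm using Nat.le_induction with
  | base =>
    have hself := sum_separates_self (Units.coeHom ℤ) m
    simp only [Units.coeHom_apply] at hself
    simp [hself]
  | succ N hmN ih =>
    have hsucc := sum_separates_succ (Units.coeHom ℤ) hmN
    simp only [Units.coeHom_apply, Units.val_neg, Units.val_one] at hsucc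
    obtain ⟨K, rfl⟩ : ∃ K, N = K + 2 := ⟨N - 2, by omega⟩
    rw [hsucc, show K + 2 + 1 - m = K + 2 - m + 1 by omega, show K + 2 + 1 - 2 = K + 1 by omega,
      factorial_succ, pow_succ]
    rw [show K + 2 - 2 = K by omega] at ih
    push_cast
    linear_combination (-(K : ℤ) - 1) * ih

theorem cycleCount_add_sum_cycleType {N : ℕ} (σ : Perm (Fin N)) :
    cycleCount σ + σ.cycleType.sum = Multiset.card σ.cycleType + N := by
  have hsplit := card_filter_add_card_filter_not (s := univ) (fun x => σ x = x)
  rw [Finset.card_univ, Fintype.card_fin] at hsplit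
  rw [cycleCount, sum_cycleType, support]
  simp only [ne_eq]
  omega

theorem sign_eq_neg_one_pow_cycleCount {N : ℕ} (σ : Perm (Fin N)) :
    sign σ = (-1) ^ (N + cycleCount σ) := by
  have h := cycleCount_add_sum_cycleType σ
  rw [sign_of_cycleType, Int.units_pow_eq_pow_mod_two, Int.units_pow_eq_pow_mod_two (n := N + _)]
  congr 1
  omega

theorem cycleCount_mem_Icc {N : ℕ} (σ : Perm (Fin (N + 1))) : cycleCount σ ∈ Icc 1 (N + 1) := by
  have h := cycleCount_add_sum_cycleType σ
  have hsum := sum_cycleType_le σ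
  have hcard : Multiset.card σ.cycleType ≤ σ.cycleType.sum := by
    simpa using Multiset.card_nsmul_le_sum (a := 1)
      fun k hk => (one_lt_two.trans_le (two_le_of_mem_cycleType hk)).le
  rw [Fintype.card_fin] at hsum
  rw [mem_Icc]
  rcases eq_or_ne σ 1 with rfl | hσ
  · simp only [cycleType_one, Multiset.sum_zero, Multiset.card_zero] at h
    omega
  · have hpos := card_cycleType_pos.2 hσ
    omega

theorem two_mul_card_sign_eq_neg_one {α : Type*} [Fintype α] [DecidableEq α]
    (s : Finset (Perm α)) :
    2 * (#{σ ∈ s | sign σ = -1} : ℤ) = #s - ∑ σ ∈ s, (sign σ : ℤ) := by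
  have h (σ : Perm α) : 1 - (sign σ : ℤ) = if sign σ = -1 then 2 else 0 := by
    rcases Int.units_eq_one_or (sign σ) with h | h <;> simp [h]
  rw [card_eq_sum_ones s, Nat.cast_sum, ← sum_sub_distrib]
  simp [h, sum_ite, mul_comm]

open scoped Classical in
theorem sum_sepCount_parity (n m : ℕ) :
    ∑ k ∈ (Icc 1 (n + 1)).filter (fun k => k % 2 = n % 2), sepCount (n + 1) m k =
      #{σ : Perm (Fin (n + 1)) | Separates m σ ∧ sign σ = -1} := by
  have hfiber (k : ℕ) : sepCount (n + 1) m k =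
      #{σ ∈ {σ : Perm (Fin (n + 1)) | Separates m σ} | cycleCount σ = k} := by
    rw [sepCount, Nat.card_eq_fintype_card, Fintype.card_subtype, filter_filter]
    simp only [and_comm]
  simp only [hfiber]
  rw [sum_card_fiberwise_eq_card_filter, filter_filter]
  refine congrArg card (filter_congr fun σ _ => and_congr_right fun _ => ?_)
  have hbounds := mem_Icc.1 (cycleCount_mem_Icc σ)
  rw [mem_filter, sign_eq_neg_one_pow_cycleCount, Int.units_pow_eq_pow_mod_two]
  rcases Nat.mod_two_eq_zero_or_one (n + 1 + cycleCount σ) with h | h <;> simp [h] <;> omega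

open scoped Classical in
theorem two_mul_card_odd_separates {m n : ℕ} (hm2 : 2 ≤ m) (hm : m ≤ n) (heven : Even (n - m)) :
    (2 * #{σ : Perm (Fin (n + 1)) | Separates m σ ∧ sign σ = -1} : ℚ) =
      (n + 1)! / m ! + (n - 1)! / (m - 2)! := by
  set S := ∑ σ : Perm (Fin (n + 1)) with Separates m σ, (sign σ : ℤ)
  have hodd : (2 * #{σ : Perm (Fin (n + 1)) | Separates m σ ∧ sign σ = -1} : ℚ) =
      #{σ : Perm (Fin (n + 1)) | Separates m σ} - S := by
    have h := two_mul_card_sign_eq_neg_one {σ : Perm (Fin (n + 1)) | Separates m σ}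
    rw [filter_filter] at h
    exact_mod_cast h
  have hcard : (m ! * #{σ : Perm (Fin (n + 1)) | Separates m σ} : ℚ) = (n + 1)! := by
    exact_mod_cast factorial_mul_card_separates (by omega)
  have hsign : ((m - 2)! * S : ℚ) = -(n - 1)! := by
    have h := factorial_mul_sum_sign_separates (N := n + 1) hm2 (by omega)
    rw [show n + 1 - m = n - m + 1 by omega, pow_succ, heven.neg_one_pow, one_mul, neg_one_mul,
      show n + 1 - 2 = n - 1 by omega] at h
    exact_mod_cast h
  rw [hodd, ← hcard]
  field_simp
  linear_combination -hsign

theorem sepCount_parity_sum_even_general (n m : ℕ) (hm2 : 2 ≤ m) (hm : m ≤ n)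
    (heven : Even (n - m)) :
    ((∑ k ∈ (Finset.Icc 1 (n + 1)).filter (fun k => k % 2 = n % 2),
        sepCount (n + 1) m k : ℕ) : ℚ) =
      ((n + m : ℕ) : ℚ) * ((n + 1 - m : ℕ) : ℚ) * (Nat.factorial (n - 1) : ℚ) /
        (2 * (Nat.factorial m : ℚ)) +
      (Nat.factorial (n - 1) : ℚ) / (Nat.factorial (m - 2) : ℚ) := by
  classical
  have hodd := two_mul_card_odd_separates hm2 hm heven
  rw [sum_sepCount_parity]
  obtain ⟨a, rfl⟩ : ∃ a, n = a + 1 := ⟨n - 1, by omega⟩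
  obtain ⟨b, rfl⟩ : ∃ b, m = b + 2 := ⟨m - 2, by omega⟩
  simp only [show a + 1 + 1 - (b + 2) = a - b by omega, Nat.add_sub_cancel, factorial_succ]
    at hodd ⊢
  push_cast [show b ≤ a by omega] at hodd ⊢
  field_simp at hodd ⊢
  linear_combination hodd

/-- For `n ≥ 2` and `2 ≤ m ≤ n` with `n - m` even:
`Σ_{k ≥ 1, k ≡ n (mod 2)} C_m(n+1, k) = (n+m)(n+1-m)(n-1)! / (2 m!) + (n-1)!/(m-2)!`,
the sum being finite since `C_m(n+1, k) = 0` for `k > n + 1` (so it may be truncated at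
`k = n + 1`). -/
theorem sepCount_parity_sum_even (n m : ℕ) (hn : 2 ≤ n) (hm2 : 2 ≤ m) (hm : m ≤ n)
    (heven : Even (n - m)) :
    ((∑ k ∈ (Finset.Icc 1 (n + 1)).filter (fun k => k % 2 = n % 2),
        sepCount (n + 1) m k : ℕ) : ℚ) =
      ((n + m : ℕ) : ℚ) * ((n + 1 - m : ℕ) : ℚ) * (Nat.factorial (n - 1) : ℚ) /
        (2 * (Nat.factorial m : ℚ)) +
      (Nat.factorial (n - 1) : ℚ) / (Nat.factorial (m - 2) : ℚ) :=
  sepCount_parity_sum_even_general n m hm2 hm heven
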